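/- (Claim 14, second part) Let n ≥ 3 and 2 ≤ s ≤ k−1 be integers, and let A ⊆ [k]^n be a compressed set with B_{≥1} ∪ ([s]^n ∩ B_0) ⊊ A ⊆ B_{≥1} ∪ ([s+1]^n ∩ B_0), where [m]^n = {0,…,m−1}^n. For a nonempty X ⊆ {1,…,n} let C_X = {x ∈ [k]^n : m(x) = s, R_s(x) = X, R_0(x) = ∅}, and let T be the largest nonempty subset of {1,…,n} under the binary order with C_T ∩ A ≠ ∅. Suppose T = {j} for some 2 ≤ j ≤ n, and let U = {1,…,j−1}. Then for every nonempty S ⊆ {1,…,n} with S <_bin U we have d(C_S) ⊆ d(A); moreover d(C_U) \ {w_j} ⊆ d(A), where w_j is the point whose coordinates equal s in positions 1,…,j−1, equal 0 in position j, and equal s−1 in positions j+1,…,n. -/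

import Mathlib

open Finset
open scoped Classical

/-- `R_i(x)`: the set of coordinates of `x` equal to `i`.
The ambient alphabet is `[k+1] = {0,…,k}`. -/
noncomputable def rset {k N : ℕ} (x : Fin N → Fin (k + 1)) (i : ℕ) : Finset (Fin N) :=
  Finset.univ.filter fun j => (x j : ℕ) = i

/-- the strict binary order on finite sets of coordinates:
`X <_bin Y` iff `X ≠ Y` and `max (X Δ Y) ∈ Y`. -/
def binLT {N : ℕ} (X Y : Finset (Fin N)) : Prop :=
  ∃ m ∈ Y, m ∉ X ∧ ∀ j : Fin N, ((j ∈ X ∧ j ∉ Y) ∨ (j ∈ Y ∧ j ∉ X)) → j ≤ m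

/-- the strict `≤`-order on `[k+1]^N`: `x < y` iff `|R_0(x)| > |R_0(y)|`, or
`|R_0(x)| = |R_0(y)|` and for the largest `i` with `R_i(x) ≠ R_i(y)` we have
`max (R_i(x) Δ R_i(y)) ∈ R_i(y)`. -/
def plt {k N : ℕ} (x y : Fin N → Fin (k + 1)) : Prop :=
  (rset y 0).card < (rset x 0).card ∨
    ((rset x 0).card = (rset y 0).card ∧
      ∃ i : ℕ, binLT (rset x i) (rset y i) ∧ ∀ j : ℕ, i < j → rset x j = rset y j)

/-- the `≤`-order on `[k+1]^N`. -/
def ple {k N : ℕ} (x y : Fin N → Fin (k + 1)) : Prop := x = y ∨ plt x y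

/-- `B` is an initial segment of the `≤`-order. -/
def isInitSeg {k N : ℕ} (B : Finset (Fin N → Fin (k + 1))) : Prop :=
  ∀ y ∈ B, ∀ x, ple x y → x ∈ B

/-- the `d`-shadow: all points obtained from a point of `A` by flipping one
nonzero coordinate to `0`. -/
noncomputable def dShadow {k N : ℕ} (A : Finset (Fin N → Fin (k + 1))) :
    Finset (Fin N → Fin (k + 1)) :=
  A.biUnion fun x =>
    (Finset.univ.filter fun i => x i ≠ 0).image fun i => Function.update x i 0

/-- the initial segment of the `≤`-order on `[k+1]^N` of cardinality `m`. -/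
noncomputable def initSeg (k N m : ℕ) : Finset (Fin N → Fin (k + 1)) :=
  Finset.univ.filter fun x => (Finset.univ.filter fun y => ple y x).card ≤ m

/-- the `C_s`-compression of `A ⊆ [k+1]^(n+1)`: replace each slice
`A_{s,t} = {y : t_s y ∈ A}` by the initial segment of the same size. -/
noncomputable def compress {k n : ℕ} (s : Fin (n + 1)) (A : Finset (Fin (n + 1) → Fin (k + 1))) :
    Finset (Fin (n + 1) → Fin (k + 1)) :=
  Finset.univ.biUnion fun t : Fin (k + 1) =>
    (initSeg k n
        (Finset.univ.filter fun y : Fin n → Fin (k + 1) => s.insertNth t y ∈ A).card).image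
      fun y => s.insertNth t y

/-- `A` is compressed if every `C_s`-compression fixes it. -/
def IsCompressed {k n : ℕ} (A : Finset (Fin (n + 1) → Fin (k + 1))) : Prop :=
  ∀ s : Fin (n + 1), compress s A = A

/-- `B_r`: points with exactly `r` zero coordinates. -/
noncomputable def Bexact (k N r : ℕ) : Finset (Fin N → Fin (k + 1)) :=
  Finset.univ.filter fun x => (rset x 0).card = r

/-- `B_{≥r}`: points with at least `r` zero coordinates. -/
noncomputable def Bge (k N r : ℕ) : Finset (Fin N → Fin (k + 1)) :=
  Finset.univ.filter fun x => r ≤ (rset x 0).card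

/-- `m(x)`: the largest coordinate value of `x`. -/
noncomputable def mval {k N : ℕ} (x : Fin N → Fin (k + 1)) : ℕ :=
  Finset.univ.sup fun i => (x i : ℕ)

/-- the class `C_X`: points with maximal coordinate `s`, attained exactly on `X`,
and exactly `r` zero coordinates. -/
noncomputable def classSet (k N s r : ℕ) (X : Finset (Fin N)) : Finset (Fin N → Fin (k + 1)) :=
  Finset.univ.filter fun x => mval x = s ∧ rset x s = X ∧ (rset x 0).card = r

/-- `[m]^N = {0,…,m−1}^N`. -/
noncomputable def box (k N m : ℕ) : Finset (Fin N → Fin (k + 1)) :=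
  Finset.univ.filter fun x => ∀ i, (x i : ℕ) < m

/-- `{1,…,s−1}^N`. -/
noncomputable def box1 (k N s : ℕ) : Finset (Fin N → Fin (k + 1)) :=
  Finset.univ.filter fun x => ∀ i, 1 ≤ (x i : ℕ) ∧ (x i : ℕ) ≤ s - 1

/-- `B` is a down-set. -/
def isDownSet {k N : ℕ} (B : Finset (Fin N → Fin (k + 1))) : Prop :=
  ∀ y ∈ B, ∀ x : Fin N → Fin (k + 1), (∀ j, (x j : ℕ) ≤ (y j : ℕ)) → x ∈ B

/-!
Fix `a ∈ C_{j} ∩ A`. Everything rests on one consequence of compression: if two points agree in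
a coordinate `p` and, after deleting `p`, one precedes the other in the `≤`-order, then membership
in `A` passes from the larger to the smaller. Lowering a coordinate `p ≠ j` of `a` to `1` and
comparing at level `s` shows that every zero-free point with values at most `s`, whose `s`'s all
lie before `j` and which is `1` somewhere off `j`, lies in `A`; this covers the points of `d(C_S)`
zeroed off `j`. Zeroing `j` needs `y ∈ A`, where `y` is `x ∈ C_S` with `x_j` replaced by `1`. Pick
`w ≠ j` with `x_w ≠ s`: for `s = 2` already `y_w = 1`; for `s ≥ 3` compare `y` with the point that
keeps the `s`'s of `x`, is `1` at `w` and `s - 1` elsewhere, which succeeds when `w < j` or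
`x_w ≤ s - 2`. For `S <_bin U` the largest element of `U \ S` serves as `w`; in `C_U` such a `w`
exists except for the point that gives `w_j`.
-/

lemma mem_rset {k N : ℕ} {x : Fin N → Fin (k + 1)} {i : ℕ} {q : Fin N} :
    q ∈ rset x i ↔ (x q : ℕ) = i := by
  simp [rset]

lemma binLT_of_witness {N : ℕ} {X Y : Finset (Fin N)} {m : Fin N}
    (hmY : m ∈ Y) (hmX : m ∉ X) (hlt : ∀ q ∈ X, q ∉ Y → q < m) : binLT X Y := by
  set D := (X \ Y) ∪ (Y \ X)
  have hmD : m ∈ D := mem_union_right _ (mem_sdiff.2 ⟨hmY, hmX⟩)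
  have hD : D.Nonempty := ⟨m, hmD⟩
  have hmax : D.max' hD ∈ Y \ X := by
    rcases mem_union.1 (D.max'_mem hD) with h | h
    · obtain ⟨hX, hY⟩ := mem_sdiff.1 h
      exact absurd (D.le_max' m hmD) (not_le.2 (hlt _ hX hY))
    · exact h
  refine ⟨D.max' hD, (mem_sdiff.1 hmax).1, (mem_sdiff.1 hmax).2, fun q hq => D.le_max' q ?_⟩
  rcases hq with h | h
  · exact mem_union_left _ (mem_sdiff.2 h)
  · exact mem_union_right _ (mem_sdiff.2 h)

lemma binLT_trans {N : ℕ} {X Y Z : Finset (Fin N)}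
    (hXY : binLT X Y) (hYZ : binLT Y Z) : binLT X Z := by
  obtain ⟨m₁, hm₁Y, hm₁X, hmax₁⟩ := hXY
  obtain ⟨m₂, hm₂Z, hm₂Y, hmax₂⟩ := hYZ
  rcases lt_trichotomy m₁ m₂ with h | rfl | h
  · refine binLT_of_witness hm₂Z (fun hX => (hmax₁ _ (Or.inl ⟨hX, hm₂Y⟩)).not_gt h) ?_
    intro q hqX hqZ
    by_cases hqY : q ∈ Y
    · exact (hmax₂ q (Or.inl ⟨hqY, hqZ⟩)).lt_of_ne (by rintro rfl; exact hm₂Y hqY)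
    · exact (hmax₁ q (Or.inl ⟨hqX, hqY⟩)).trans_lt h
  · exact absurd hm₁Y hm₂Y
  · have hm₁Z : m₁ ∈ Z := by
      by_contra hc
      exact (hmax₂ m₁ (Or.inl ⟨hm₁Y, hc⟩)).not_gt h
    refine binLT_of_witness hm₁Z hm₁X ?_
    intro q hqX hqZ
    by_cases hqY : q ∈ Y
    · exact (hmax₂ q (Or.inl ⟨hqY, hqZ⟩)).trans_lt h
    · exact (hmax₁ q (Or.inl ⟨hqX, hqY⟩)).lt_of_ne (by rintro rfl; exact hm₁X hqX)

lemma plt_trans {k N : ℕ} {x y z : Fin N → Fin (k + 1)}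
    (hxy : plt x y) (hyz : plt y z) : plt x z := by
  rcases hxy with hxy | ⟨hxy, i₁, hb₁, he₁⟩ <;> rcases hyz with hyz | ⟨hyz, i₂, hb₂, he₂⟩
  · exact Or.inl (hyz.trans hxy)
  · exact Or.inl (hyz ▸ hxy)
  · exact Or.inl (hxy ▸ hyz)
  refine Or.inr ⟨hxy.trans hyz, ?_⟩
  rcases lt_trichotomy i₁ i₂ with h | rfl | h
  · exact ⟨i₂, he₁ i₂ h ▸ hb₂, fun l hl => (he₁ l (h.trans hl)).trans (he₂ l hl)⟩
  · exact ⟨i₁, binLT_trans hb₁ hb₂, fun l hl => (he₁ l hl).trans (he₂ l hl)⟩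
  · exact ⟨i₁, he₂ i₁ h ▸ hb₁, fun l hl => (he₁ l hl).trans (he₂ l (h.trans hl))⟩

lemma ple_trans {k N : ℕ} {x y z : Fin N → Fin (k + 1)}
    (hxy : ple x y) (hyz : ple y z) : ple x z := by
  rcases hxy with rfl | hxy
  · exact hyz
  rcases hyz with rfl | hyz
  · exact Or.inr hxy
  · exact Or.inr (plt_trans hxy hyz)

lemma mem_initSeg_of_ple {k N m : ℕ} {x y : Fin N → Fin (k + 1)}
    (hy : y ∈ initSeg k N m) (hxy : ple x y) : x ∈ initSeg k N m := by
  simp only [initSeg, mem_filter, mem_univ, true_and] at hy ⊢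
  exact (card_le_card fun z hz => by
    simp only [mem_filter, mem_univ, true_and] at hz ⊢
    exact ple_trans hz hxy).trans hy

lemma insertNth_mem_of_ple {k n : ℕ} {A : Finset (Fin (n + 1) → Fin (k + 1))}
    (hA : IsCompressed A) {p : Fin (n + 1)} {t : Fin (k + 1)} {u v : Fin n → Fin (k + 1)}
    (hv : p.insertNth t v ∈ A) (huv : ple u v) : p.insertNth t u ∈ A := by
  rw [← hA p] at hv ⊢
  simp only [compress, mem_biUnion, mem_univ, true_and, mem_image, Fin.insertNth_inj] at hv ⊢
  obtain ⟨t, v, hv, rfl, rfl⟩ := hv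
  exact ⟨t, u, mem_initSeg_of_ple hv huv, rfl, rfl⟩

lemma plt_removeNth {k n : ℕ} {x y : Fin (n + 1) → Fin (k + 1)} {p m : Fin (n + 1)} {i : ℕ}
    (hp : x p = y p) (h0 : ∀ q, (x q : ℕ) = 0 ↔ (y q : ℕ) = 0)
    (hmy : (y m : ℕ) = i) (hmx : (x m : ℕ) ≠ i)
    (hlt : ∀ q, (x q : ℕ) = i → (y q : ℕ) ≠ i → q < m)
    (habove : ∀ q l, i < l → ((x q : ℕ) = l ↔ (y q : ℕ) = l)) :
    plt (p.removeNth x) (p.removeNth y) := by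
  have hmp : m ≠ p := by rintro rfl; exact hmx (hp ▸ hmy)
  obtain ⟨m', rfl⟩ := Fin.exists_succAbove_eq hmp
  have hrset : ∀ l, (∀ q, (x q : ℕ) = l ↔ (y q : ℕ) = l) →
      rset (p.removeNth x) l = rset (p.removeNth y) l := fun l h => by
    ext q; simp only [mem_rset, Fin.removeNth_apply, h]
  refine Or.inr ⟨by rw [hrset 0 h0], i, binLT_of_witness (m := m') ?_ ?_ ?_,
    fun l hl => hrset l (fun q => habove q l hl)⟩
  · simpa only [mem_rset, Fin.removeNth_apply] using hmy
  · simpa only [mem_rset, Fin.removeNth_apply] using hmx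
  · simp only [mem_rset, Fin.removeNth_apply]
    exact fun q hx hy => Fin.succAbove_lt_succAbove_iff.1 (hlt _ hx hy)

lemma mem_of_plt_removeNth {k n : ℕ} {A : Finset (Fin (n + 1) → Fin (k + 1))}
    (hA : IsCompressed A) {x y : Fin (n + 1) → Fin (k + 1)} {p : Fin (n + 1)}
    (hy : y ∈ A) (hp : x p = y p) (hxy : plt (p.removeNth x) (p.removeNth y)) : x ∈ A := by
  have h := insertNth_mem_of_ple hA (t := y p) (by rwa [Fin.insertNth_self_removeNth]) (Or.inr hxy)
  rwa [← hp, Fin.insertNth_self_removeNth] at h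

/-- The compression acting here is the one at the second coordinate `p`. -/
lemma update_mem_of_le {k n : ℕ} {A : Finset (Fin (n + 1) → Fin (k + 1))}
    (hA : IsCompressed A) {y : Fin (n + 1) → Fin (k + 1)} (hy : y ∈ A) {p q : Fin (n + 1)}
    (hpq : p ≠ q) {v : Fin (k + 1)} (hv : 1 ≤ (v : ℕ)) (hvy : (v : ℕ) ≤ y q) :
    Function.update y q v ∈ A := by
  rcases hvy.eq_or_lt with hvy | hvy
  · rwa [Fin.ext hvy, Function.update_eq_self]
  have hp : Function.update y q v p = y p := Function.update_of_ne hpq _ _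
  refine mem_of_plt_removeNth hA hy hp (plt_removeNth (m := q) hp ?_ rfl ?_ ?_ ?_)
  · intro r
    rcases eq_or_ne r q with rfl | hr
    · simp only [Function.update_self]; omega
    · rw [Function.update_of_ne hr]
  · rw [Function.update_self]; omega
  · intro r hr hyr
    rcases eq_or_ne r q with rfl | hrq
    · rw [Function.update_self] at hr; omega
    · rw [Function.update_of_ne hrq] at hr; exact absurd hr hyr
  · intro r l hl
    rcases eq_or_ne r q with rfl | hr
    · simp only [Function.update_self]; omega
    · rw [Function.update_of_ne hr]

lemma apply_of_mem_classSet {k N s : ℕ} {S : Finset (Fin N)} {x : Fin N → Fin (k + 1)}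
    (hx : x ∈ classSet k N s 0 S) (q : Fin N) :
    1 ≤ (x q : ℕ) ∧ (x q : ℕ) ≤ s ∧ ((x q : ℕ) = s ↔ q ∈ S) := by
  simp only [classSet, mem_filter, mem_univ, true_and, card_eq_zero] at hx
  obtain ⟨hmax, hS, h0⟩ := hx
  have hq0 : q ∉ rset x 0 := h0 ▸ notMem_empty q
  rw [mem_rset] at hq0
  refine ⟨by omega, hmax ▸ le_sup (f := fun i => (x i : ℕ)) (mem_univ q), ?_⟩
  rw [← hS, mem_rset]

def TopBefore {k N : ℕ} (s : ℕ) (j : Fin N) (x : Fin N → Fin (k + 1)) : Prop :=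
  ∀ q, 1 ≤ (x q : ℕ) ∧ (x q : ℕ) ≤ s ∧ ((x q : ℕ) = s → q < j)

lemma topBefore_of_mem_classSet {k N s : ℕ} {S : Finset (Fin N)} {j : Fin N}
    {x : Fin N → Fin (k + 1)} (hx : x ∈ classSet k N s 0 S) (hS : ∀ q ∈ S, q < j) :
    TopBefore s j x := fun q =>
  have ⟨h1, hs, hxS⟩ := apply_of_mem_classSet hx q
  ⟨h1, hs, fun h => hS q (hxS.1 h)⟩

lemma TopBefore.update {k N s : ℕ} {j : Fin N} {x : Fin N → Fin (k + 1)}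
    (hx : TopBefore s j x) (i : Fin N) {v : Fin (k + 1)} (hv : 1 ≤ (v : ℕ)) (hvs : (v : ℕ) < s) :
    TopBefore s j (Function.update x i v) := by
  intro q
  rcases eq_or_ne q i with rfl | hq
  · rw [Function.update_self]; omega
  · rw [Function.update_of_ne hq]; exact hx q

section

variable {k n s : ℕ} {A : Finset (Fin (n + 1) → Fin (k + 1))} {j : Fin (n + 1)}
  {x : Fin (n + 1) → Fin (k + 1)}

/-- Lower the witness `a ∈ C_{j} ∩ A` to `x p` at `p`; after deleting `p`, its only
`s` sits at `j`, beyond all the `s`-positions of `x`. -/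
lemma mem_of_apply_eq_one (hA : IsCompressed A) (hT : (classSet k (n + 1) s 0 {j} ∩ A).Nonempty)
    (hx : TopBefore s j x) {p : Fin (n + 1)} (hpj : p ≠ j) (hxp : (x p : ℕ) = 1) : x ∈ A := by
  obtain ⟨a, ha⟩ := hT
  obtain ⟨haC, haA⟩ := mem_inter.1 ha
  have ha := apply_of_mem_classSet haC
  set b := Function.update a p (x p)
  have hbA : b ∈ A := update_mem_of_le hA haA hpj.symm hxp.ge (by have := (ha p).1; omega)
  have hb : ∀ q, 1 ≤ (b q : ℕ) ∧ (b q : ℕ) ≤ s := by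
    intro q
    rcases eq_or_ne q p with rfl | hq
    · have := ha q; simp only [b, Function.update_self]; omega
    · simp only [b, Function.update_of_ne hq]; exact ⟨(ha q).1, (ha q).2.1⟩
  have hp : x p = b p := by simp [b]
  refine mem_of_plt_removeNth hA hbA hp (plt_removeNth (m := j) (i := s) hp ?_ ?_ ?_ ?_ ?_)
  · intro q; have := hx q; have := hb q; omega
  · simpa only [b, Function.update_of_ne hpj.symm] using (ha j).2.2.2 (mem_singleton_self j)
  · exact fun h => lt_irrefl j ((hx j).2.2 h)
  · exact fun q hq _ => (hx q).2.2 hq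
  · intro q l hl; have := hx q; have := hb q; omega

lemma update_one_mem_of_ne (hA : IsCompressed A) (hs : 2 ≤ s)
    (hT : (classSet k (n + 1) s 0 {j} ∩ A).Nonempty) (hx : TopBefore s j x) {i : Fin (n + 1)}
    (hij : i ≠ j) : Function.update x i 1 ∈ A := by
  have h1 : ((1 : Fin (k + 1)) : ℕ) = 1 := by
    have := (hx i).1; have := (x i).isLt
    rw [Fin.val_one', Nat.mod_eq_of_lt (by omega)]
  exact mem_of_apply_eq_one hA hT (hx.update i (by omega) (by omega)) hij
    (by rw [Function.update_self, h1])

lemma exists_mem_eq_ite (hA : IsCompressed A) (hs : 2 ≤ s)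
    (hT : (classSet k (n + 1) s 0 {j} ∩ A).Nonempty) (hx : TopBefore s j x) (hsk : s < k + 1)
    {w : Fin (n + 1)} (hwj : w ≠ j) :
    ∃ c ∈ A, ∀ q, (c q : ℕ) = if q = w then 1 else if (x q : ℕ) = s then s else s - 1 := by
  set c₀ : Fin (n + 1) → Fin (k + 1) := fun q => if (x q : ℕ) = s then x q else ⟨s - 1, by omega⟩
  have hc₀ : ∀ q, (c₀ q : ℕ) = if (x q : ℕ) = s then s else s - 1 := fun q => by
    by_cases hq : (x q : ℕ) = s <;> simp only [c₀, hq, if_true, if_false]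
  have hc₀T : TopBefore s j c₀ := fun q => by
    have := hx q
    rw [hc₀]; split_ifs <;> omega
  refine ⟨_, update_one_mem_of_ne hA hs hT hc₀T hwj, fun q => ?_⟩
  rcases eq_or_ne q w with rfl | hq
  · rw [Function.update_self, Fin.val_one', Nat.mod_eq_of_lt (by omega), if_pos rfl]
  · rw [Function.update_of_ne hq, hc₀, if_neg hq]

/-- For `s ≥ 3` compare with the point `c` of `exists_mem_eq_ite`: after deleting an
`s`-position `r` the two points first differ at level `s - 1`, where `j` decides in favour of `c`. -/
lemma update_one_mem_at_j (hA : IsCompressed A) (hs : 2 ≤ s)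
    (hT : (classSet k (n + 1) s 0 {j} ∩ A).Nonempty) (hx : TopBefore s j x) {r : Fin (n + 1)}
    (hr : (x r : ℕ) = s) {w : Fin (n + 1)} (hwj : w ≠ j) (hws : (x w : ℕ) ≠ s)
    (hw : (x w : ℕ) = s - 1 → w < j) : Function.update x j 1 ∈ A := by
  have hsk : s < k + 1 := hr ▸ (x r).isLt
  have h1 : ((1 : Fin (k + 1)) : ℕ) = 1 := by rw [Fin.val_one', Nat.mod_eq_of_lt (by omega)]
  set y := Function.update x j 1 with hy_def
  have hy : ∀ q, (y q : ℕ) = if q = j then 1 else (x q : ℕ) := fun q => by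
    rcases eq_or_ne q j with rfl | hq
    · rw [hy_def, Function.update_self, h1, if_pos rfl]
    · rw [hy_def, Function.update_of_ne hq, if_neg hq]
  rcases hs.eq_or_lt with rfl | hs
  · refine mem_of_apply_eq_one hA hT (hx.update j (by omega) (by omega)) hwj ?_
    rw [hy, if_neg hwj]; have := hx w; omega
  obtain ⟨c, hcA, hc⟩ := exists_mem_eq_ite hA (by omega) hT hx hsk hwj
  have hxj : (x j : ℕ) ≠ s := fun h => lt_irrefl j ((hx j).2.2 h)
  have hys : ∀ q, (y q : ℕ) = s ↔ (x q : ℕ) = s := fun q => by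
    rw [hy]; split_ifs with hq
    · subst hq; omega
    · rfl
  have hcs : ∀ q, (c q : ℕ) = s ↔ (x q : ℕ) = s := fun q => by
    rw [hc]; split_ifs with hqw <;> [(subst hqw; omega); omega; omega]
  have hbd : ∀ q, 1 ≤ (y q : ℕ) ∧ (y q : ℕ) ≤ s ∧
      1 ≤ (c q : ℕ) ∧ (c q : ℕ) ≤ s := fun q => by
    obtain ⟨h1, hs, -⟩ := hx q; rw [hy, hc]; split_ifs <;> omega
  have hp : y r = c r := Fin.ext <| by
    have := hys r; have := hcs r; have := hbd r; omega
  refine mem_of_plt_removeNth hA hcA hp (plt_removeNth (m := j) (i := s - 1) hp ?_ ?_ ?_ ?_ ?_)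
  · intro q; have := hbd q; omega
  · rw [hc, if_neg hwj.symm, if_neg hxj]
  · rw [hy, if_pos rfl]; omega
  · intro q hyq hcq
    have hqj : q ≠ j := by rintro rfl; rw [hy, if_pos rfl] at hyq; omega
    rw [hy, if_neg hqj] at hyq
    have hqw : q = w := by by_contra hqw; rw [hc, if_neg hqw] at hcq; split_ifs at hcq <;> omega
    subst hqw; exact hw hyq
  · intro q l hl; have := hys q; have := hcs q; have := hbd q; omega

end

lemma mem_dShadow {k N : ℕ} {A : Finset (Fin N → Fin (k + 1))} {z : Fin N → Fin (k + 1)} :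
    z ∈ dShadow A ↔ ∃ x ∈ A, ∃ i, x i ≠ 0 ∧ Function.update x i 0 = z := by
  simp [dShadow]

lemma update_zero_mem_dShadow {k N : ℕ} {A : Finset (Fin N → Fin (k + 1))}
    {x : Fin N → Fin (k + 1)} {i : Fin N} {v : Fin (k + 1)} (hv : v ≠ 0)
    (hx : Function.update x i v ∈ A) : Function.update x i 0 ∈ dShadow A :=
  mem_dShadow.2 ⟨_, hx, i, by rwa [Function.update_self], by rw [Function.update_idem]⟩

lemma binLT_filter_lt {N : ℕ} {S : Finset (Fin N)} {j : Fin N}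
    (h : binLT S (univ.filter fun i => i < j)) : (∀ q ∈ S, q < j) ∧ ∃ m < j, m ∉ S := by
  obtain ⟨m, hmj, hmS, hmax⟩ := h
  rw [mem_filter] at hmj
  refine ⟨fun q hq => ?_, m, hmj.2, hmS⟩
  by_contra hqj
  exact hqj ((hmax q (Or.inl ⟨hq, by simpa using hqj⟩)).trans_lt hmj.2)

lemma exists_le_sub_two_of_update_ne {k n s : ℕ} (hsk : s ≤ k) {j : Fin (n + 1)}
    {x : Fin (n + 1) → Fin (k + 1)} (hx : TopBefore s j x) (hxs : ∀ q, (x q : ℕ) = s ↔ q < j)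
    (hne : Function.update x j 0 ≠ fun i : Fin (n + 1) =>
      if i < j then (Fin.ofNat (k + 1) s)
      else if i = j then (0 : Fin (k + 1)) else (Fin.ofNat (k + 1) (s - 1))) :
    ∃ r, r ≠ j ∧ (x r : ℕ) ≤ s - 2 := by
  by_contra! h
  refine hne (funext fun q => Fin.ext ?_)
  obtain ⟨-, hle, -⟩ := hx q
  rcases lt_trichotomy q j with hq | rfl | hq
  · have := (hxs q).2 hq
    simp only [Function.update_of_ne hq.ne, hq, if_true, Fin.val_ofNat,
      Nat.mod_eq_of_lt (Nat.lt_succ_of_le hsk)]; omega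
  · simp
  · have := h q hq.ne'
    have := (hxs q).not.2 hq.not_gt
    simp only [Function.update_of_ne hq.ne', hq.not_gt, hq.ne', if_false, Fin.val_ofNat,
      Nat.mod_eq_of_lt (show s - 1 < k + 1 by omega)]; omega

theorem claim14_second_general (k n s : ℕ) (hs1 : 2 ≤ s) (hs2 : s ≤ k)
    (A : Finset (Fin (n + 1) → Fin (k + 1))) (hA : IsCompressed A)
    (j : Fin (n + 1)) (hj : j ≠ 0)
    (hT : (classSet k (n + 1) s 0 {j} ∩ A).Nonempty) :
    (∀ S : Finset (Fin (n + 1)), S.Nonempty →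
      binLT S (Finset.univ.filter fun i => i < j) →
        dShadow (classSet k (n + 1) s 0 S) ⊆ dShadow A) ∧
    (∀ z ∈ dShadow (classSet k (n + 1) s 0 (Finset.univ.filter fun i => i < j)),
      z ≠ (fun i : Fin (n + 1) =>
          if i < j then (Fin.ofNat (k + 1) s)
          else if i = j then (0 : Fin (k + 1)) else (Fin.ofNat (k + 1) (s - 1))) →
        z ∈ dShadow A) := by
  have hone : (1 : Fin (k + 1)) ≠ 0 :=
    Fin.ne_of_val_ne (by rw [Fin.val_one', Nat.mod_eq_of_lt (by omega)]; exact one_ne_zero)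
  refine ⟨fun S hS hSU z hz => ?_, fun z hz hzw => ?_⟩
  · obtain ⟨x, hx, i, -, rfl⟩ := mem_dShadow.1 hz
    obtain ⟨hSj, m, hmj, hmS⟩ := binLT_filter_lt hSU
    have hxT := topBefore_of_mem_classSet hx hSj
    refine update_zero_mem_dShadow hone ?_
    rcases eq_or_ne i j with rfl | hij
    · obtain ⟨r, hr⟩ := hS
      exact update_one_mem_at_j hA hs1 hT hxT ((apply_of_mem_classSet hx r).2.2.2 hr) hmj.ne
        (fun h => hmS ((apply_of_mem_classSet hx m).2.2.1 h)) (fun _ => hmj)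
    · exact update_one_mem_of_ne hA hs1 hT hxT hij
  · obtain ⟨x, hx, i, -, rfl⟩ := mem_dShadow.1 hz
    have hxs : ∀ q, (x q : ℕ) = s ↔ q < j := fun q => by
      simpa using (apply_of_mem_classSet hx q).2.2
    have hxT := topBefore_of_mem_classSet hx (fun q hq => by simpa using hq)
    refine update_zero_mem_dShadow hone ?_
    rcases eq_or_ne i j with rfl | hij
    · obtain ⟨r, hri, hr⟩ := exists_le_sub_two_of_update_ne hs2 hxT hxs hzw
      exact update_one_mem_at_j hA hs1 hT hxT ((hxs 0).2 (Fin.pos_iff_ne_zero.2 hj)) hri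
        (by omega) (by omega)
    · exact update_one_mem_of_ne hA hs1 hT hxT hij

/-- **Claim 14, second part.** Let `n ≥ 3`, `2 ≤ s ≤ k − 1`, and let `A ⊆ [k]^n` be
compressed with `B_{≥1} ∪ ([s]^n ∩ B_0) ⊊ A ⊆ B_{≥1} ∪ ([s+1]^n ∩ B_0)`. Let `T` be the
largest nonempty set under the binary order with `C_T ∩ A ≠ ∅`, and suppose `T = {j}`
for some index `j` other than the first; let `U` be the set of indices before `j`.
Then for every nonempty `S` with `S <_bin U` we have `d(C_S) ⊆ d(A)`; moreover
`d(C_U) \ {w_j} ⊆ d(A)`, where `w_j` has value `s` before position `j`, `0` at `j`,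
and `s − 1` after `j`. (Dimension `n ≥ 3` is rendered as `n + 1` with `n ≥ 2`; indices
`{1,…,n}` as `Fin (n+1)` with first index `0`; alphabet `[k]` as `Fin (k+1)`, so `s ≤ k`.) -/
theorem claim14_second (k n s : ℕ) (hn : 2 ≤ n) (hs1 : 2 ≤ s) (hs2 : s ≤ k)
    (A : Finset (Fin (n + 1) → Fin (k + 1))) (hA : IsCompressed A)
    (hlow : Bge k (n + 1) 1 ∪ (box k (n + 1) s ∩ Bexact k (n + 1) 0) ⊂ A)
    (hhigh : A ⊆ Bge k (n + 1) 1 ∪ (box k (n + 1) (s + 1) ∩ Bexact k (n + 1) 0))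
    (j : Fin (n + 1)) (hj : j ≠ 0)
    (hT : (classSet k (n + 1) s 0 {j} ∩ A).Nonempty)
    (hTmax : ∀ S : Finset (Fin (n + 1)), S.Nonempty →
      (classSet k (n + 1) s 0 S ∩ A).Nonempty → S = {j} ∨ binLT S {j}) :
    (∀ S : Finset (Fin (n + 1)), S.Nonempty →
      binLT S (Finset.univ.filter fun i => i < j) →
        dShadow (classSet k (n + 1) s 0 S) ⊆ dShadow A) ∧
    (∀ z ∈ dShadow (classSet k (n + 1) s 0 (Finset.univ.filter fun i => i < j)),
      z ≠ (fun i : Fin (n + 1) =>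
          if i < j then (Fin.ofNat (k + 1) s)
          else if i = j then (0 : Fin (k + 1)) else (Fin.ofNat (k + 1) (s - 1))) →
        z ∈ dShadow A) :=
  claim14_second_general k n s hs1 hs2 A hA j hj hT
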